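/- arXiv:2108.04945 — 5 statements merged into one kernel-verified Lean document; each statement's English description precedes it below -/
import Mathlib

section
/- Let (A,B) be a pair of nonempty closed subsets of a metric space (X,d) such that B is approximatively compact with respect to A. Then the set A₀ = {x ∈ A : ∃ y ∈ B, d(x,y) = d(A,B)} is closed in X. -/
open Filter Topology

noncomputable def setDist {X : Type*} [MetricSpace X] (A B : Set X) : ℝ :=
  sInf (Set.image2 dist A B)

def pProperty {X : Type*} [MetricSpace X] (A B : Set X) : Prop :=
  ∀ u₁ ∈ A, ∀ u₂ ∈ A, ∀ v₁ ∈ B, ∀ v₂ ∈ B,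
    dist u₁ v₁ = setDist A B → dist u₂ v₂ = setDist A B → dist u₁ u₂ = dist v₁ v₂

def A0 {X : Type*} [MetricSpace X] (A B : Set X) : Set X :=
  {x ∈ A | ∃ y ∈ B, dist x y = setDist A B}

def B0 {X : Type*} [MetricSpace X] (A B : Set X) : Set X :=
  {y ∈ B | ∃ x ∈ A, dist x y = setDist A B}

def approxCompact {X : Type*} [MetricSpace X] (A B : Set X) : Prop :=
  ∀ x ∈ A, ∀ y : ℕ → X, (∀ n, y n ∈ B) →
    Tendsto (fun n => dist x (y n)) atTop (nhds (Metric.infDist x B)) →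
    ∃ z ∈ B, ∃ φ : ℕ → ℕ, StrictMono φ ∧ Tendsto (y ∘ φ) atTop (nhds z)

def OmegaF (F : ℝ → ℝ) : Prop :=
  (∀ x y : ℝ, 0 < x → x < y → F x < F y) ∧
  (∀ α : ℕ → ℝ, (∀ n, 0 < α n) →
    (Tendsto α atTop (nhds 0) ↔ Tendsto (fun n => F (α n)) atTop atBot)) ∧
  (∃ k ∈ Set.Ioo (0:ℝ) 1,
    Tendsto (fun t => t ^ k * F t) (nhdsWithin 0 (Set.Ioi 0)) (nhds 0))

def HRContraction {X : Type*} [MetricSpace X] (T : X → X) (F : ℝ → ℝ)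
    (a b c e τ L : ℝ) : Prop :=
  ∀ x y : X, 0 < dist (T x) (T y) →
    τ + F (dist (T x) (T y)) ≤
      F (a * dist x y + b * dist x (T x) + c * dist y (T y) +
         e * dist x (T y) + L * dist y (T x))

def GFProximal {X : Type*} [MetricSpace X] (A B : Set X) (T : X → X) (F : ℝ → ℝ)
    (a b c h τ : ℝ) : Prop :=
  ∀ u₁ ∈ A, ∀ u₂ ∈ A, ∀ x₁ ∈ A, ∀ x₂ ∈ A,
    dist u₁ (T x₁) = setDist A B → dist u₂ (T x₂) = setDist A B → u₁ ≠ u₂ →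
      τ + F (dist u₁ u₂) ≤
        F (a * dist x₁ x₂ + b * dist u₁ x₁ + c * dist u₂ x₂ +
           h * (dist u₂ x₁ + dist u₁ x₂))

lemma setDist_le_dist' {X : Type*} [MetricSpace X] {A B : Set X} {x y : X}
    (hx : x ∈ A) (hy : y ∈ B) : setDist A B ≤ dist x y := by
  apply csInf_le
  · exact ⟨0, fun r hr => by
      obtain ⟨a, ha, b, hb, rfl⟩ := hr
      exact dist_nonneg⟩
  · exact ⟨x, hx, y, hy, rfl⟩

theorem stmt1 {X : Type*} [MetricSpace X] (A B : Set X)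
    (hA : A.Nonempty) (hB : B.Nonempty) (hAc : IsClosed A) (hBc : IsClosed B)
    (hac : approxCompact A B) :
    IsClosed (A0 A B) := by
  apply IsSeqClosed.isClosed
  intro xseq x hxseq hxlim
  choose y hyB hyd using fun n => (hxseq n).2
  have hxA : x ∈ A := hAc.isSeqClosed (fun n => (hxseq n).1) hxlim
  have hle : setDist A B ≤ Metric.infDist x B := by
    by_contra h
    obtain ⟨y', hy', hlt⟩ := (Metric.infDist_lt_iff hB).1 (not_le.1 h)
    exact absurd (setDist_le_dist' hxA hy') (not_le.2 hlt)
  have hdistx : Tendsto (fun n => dist x (xseq n)) atTop (nhds 0) :=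
    tendsto_iff_dist_tendsto_zero.mp hxlim |>.congr (fun n => dist_comm (xseq n) x)
  have hupper : Tendsto (fun n => dist x (xseq n) + setDist A B) atTop
      (nhds (setDist A B)) := by
    simpa using hdistx.add tendsto_const_nhds
  have hsq : Tendsto (fun n => dist x (y n)) atTop (nhds (setDist A B)) := by
    refine tendsto_of_tendsto_of_tendsto_of_le_of_le tendsto_const_nhds hupper
      (fun n => le_trans hle (Metric.infDist_le_dist_of_mem (hyB n)))
      (fun n => ?_)
    calc dist x (y n) ≤ dist x (xseq n) + dist (xseq n) (y n) := dist_triangle _ _ _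
      _ = dist x (xseq n) + setDist A B := by rw [hyd n]
  have hinf : Metric.infDist x B = setDist A B := by
    refine le_antisymm ?_ hle
    exact ge_of_tendsto' hsq fun n => Metric.infDist_le_dist_of_mem (hyB n)
  obtain ⟨z, hzB, φ, hφ, hzlim⟩ := hac x hxA y hyB (hinf ▸ hsq)
  refine ⟨hxA, z, hzB, ?_⟩
  have h1 : Tendsto (fun n => dist x (y (φ n))) atTop (nhds (dist x z)) :=
    (Continuous.dist continuous_const continuous_id).continuousAt.tendsto.comp hzlim
  have h2 : Tendsto (fun n => dist x (y (φ n))) atTop (nhds (setDist A B)) :=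
    hsq.comp hφ.tendsto_atTop
  exact tendsto_nhds_unique h1 h2
end

section
/- Let (X,d) be a metric space, A,B nonempty subsets with A₀ ≠ ∅, (A,B) satisfying the p-property, and T : A → B with T(A₀) ⊆ B₀. Then there exists a unique mapping S : A₀ → A₀ such that d(S x, T x) = d(A,B) for all x ∈ A₀. -/
open Filter Topology

theorem stmt4 {X : Type*} [MetricSpace X] (A B : Set X)
    (hA : A.Nonempty) (hB : B.Nonempty) (hA0 : (A0 A B).Nonempty)
    (hp : pProperty A B)
    (T : X → X) (hT : ∀ x ∈ A, T x ∈ B)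
    (hTA0 : ∀ x ∈ A0 A B, T x ∈ B0 A B) :
    ∃! S : ↥(A0 A B) → ↥(A0 A B),
      ∀ x : ↥(A0 A B), dist (S x : X) (T (x : X)) = setDist A B := by
  have key : ∀ x : ↥(A0 A B), ∃ a : ↥(A0 A B), dist (a : X) (T (x : X)) = setDist A B := by
    rintro ⟨x, hx⟩
    obtain ⟨hTxB, a, haA, ha⟩ := hTA0 x hx
    exact ⟨⟨a, haA, T x, hTxB, ha⟩, ha⟩
  choose S hS using key
  refine ⟨S, hS, ?_⟩
  intro S' hS'
  funext x
  obtain ⟨x', hx'⟩ := x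
  ext
  have h := hp _ (S' ⟨x', hx'⟩).2.1 _ (S ⟨x', hx'⟩).2.1 _ (hT x' hx'.1) _ (hT x' hx'.1)
    (hS' ⟨x', hx'⟩) (hS ⟨x', hx'⟩)
  simpa [dist_eq_zero] using h
end

section
/- Let (X,d) be a metric space, A,B nonempty subsets with A₀ ≠ ∅, (A,B) satisfying the p-property, and T : A → B a generalized F-proximal contraction of the first kind (with F ∈ Ω and coefficients a,b,c,h,τ > 0, a+b+c+2h = 1, c ≠ 1) such that T(A₀) ⊆ B₀. Let S : A₀ → A₀ be the mapping determined by d(S x, T x) = d(A,B) for all x ∈ A₀. Then S is an F-contraction of Hardy–Rogers type on A₀ with coefficients a,b,c,e=h,τ and L=h; i.e., for all x₁,x₂ ∈ A₀ with d(Sx₁,Sx₂) > 0, τ + F(d(Sx₁,Sx₂)) ≤ F(a·d(x₁,x₂) + b·d(Sx₁,x₁) + c·d(Sx₂,x₂) + h·d(Sx₂,x₁) + h·d(Sx₁,x₂)). -/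
open Filter Topology

theorem stmt5 {X : Type*} [MetricSpace X] (A B : Set X)
    (hA : A.Nonempty) (hB : B.Nonempty) (hA0 : (A0 A B).Nonempty)
    (hp : pProperty A B)
    (T : X → X) (hT : ∀ x ∈ A, T x ∈ B) (hTA0 : ∀ x ∈ A0 A B, T x ∈ B0 A B)
    (F : ℝ → ℝ) (hF : OmegaF F) (a b c h τ : ℝ)
    (ha : 0 < a) (hb : 0 < b) (hc : 0 < c) (hh : 0 < h) (hτ : 0 < τ)
    (hsum : a + b + c + 2 * h = 1) (hc1 : c ≠ 1)
    (hprox : GFProximal A B T F a b c h τ)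
    (S : X → X) (hS0 : ∀ x ∈ A0 A B, S x ∈ A0 A B)
    (hS : ∀ x ∈ A0 A B, dist (S x) (T x) = setDist A B) :
    ∀ x₁ ∈ A0 A B, ∀ x₂ ∈ A0 A B, 0 < dist (S x₁) (S x₂) →
      τ + F (dist (S x₁) (S x₂)) ≤
        F (a * dist x₁ x₂ + b * dist (S x₁) x₁ + c * dist (S x₂) x₂ +
           h * dist (S x₂) x₁ + h * dist (S x₁) x₂) := by
  intro x₁ hx₁ x₂ hx₂ hd
  have key := hprox (S x₁) ((hS0 x₁ hx₁).1) (S x₂) ((hS0 x₂ hx₂).1)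
    x₁ hx₁.1 x₂ hx₂.1 (hS x₁ hx₁) (hS x₂ hx₂) (by
      intro he; rw [he] at hd; simp at hd)
  calc τ + F (dist (S x₁) (S x₂)) ≤ _ := key
    _ = _ := by ring_nf
end

section
/- Under the hypotheses of the Beg et al. best proximity theorem (A,B nonempty closed subsets of a complete metric space, B approximatively compact with respect to A, A₀ ≠ ∅, T(A₀) ⊆ B₀, (A,B) with the p-property, T a generalized F-proximal contraction of the first kind), the best proximity point is unique: if d(x,Tx) = d(A,B) and d(y,Ty) = d(A,B) for x,y ∈ A, then x = y. -/
open Filter Topology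

theorem stmt7 {X : Type*} [MetricSpace X] [CompleteSpace X] (A B : Set X)
    (hA : A.Nonempty) (hB : B.Nonempty) (hAc : IsClosed A) (hBc : IsClosed B)
    (hac : approxCompact A B) (hA0 : (A0 A B).Nonempty) (hp : pProperty A B)
    (T : X → X) (hT : ∀ x ∈ A, T x ∈ B) (hTA0 : ∀ x ∈ A0 A B, T x ∈ B0 A B)
    (F : ℝ → ℝ) (hF : OmegaF F) (a b c h τ : ℝ)
    (ha : 0 < a) (hb : 0 < b) (hc : 0 < c) (hh : 0 < h) (hτ : 0 < τ)
    (hsum : a + b + c + 2 * h = 1) (hc1 : c ≠ 1)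
    (hprox : GFProximal A B T F a b c h τ) :
    ∀ x ∈ A, ∀ y ∈ A, dist x (T x) = setDist A B → dist y (T y) = setDist A B →
      x = y := by
  intro x hx y hy hxT hyT
  by_contra hne
  have hd : 0 < dist x y := dist_pos.mpr hne
  have key := hprox x hx y hy x hx y hy hxT hyT hne
  have hdsym : dist y x = dist x y := dist_comm y x
  simp only [dist_self, hdsym] at key
  have hval : a * dist x y + b * 0 + c * 0 + h * (dist x y + dist x y)
      = (a + 2 * h) * dist x y := by ring
  rw [hval] at key
  have hlt : (a + 2 * h) * dist x y < dist x y := by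
    nlinarith
  have hpos : 0 < (a + 2 * h) * dist x y := by positivity
  have := hF.1 _ _ hpos hlt
  linarith
end

section
/- Let (X,d) be a metric space, A,B nonempty subsets with A₀ = A (every point of A admits a closest point in B at distance d(A,B)) and (A,B) with the p-property, and T : A → B a generalized F-proximal contraction of the first kind. Then T has at most one best proximity point: if d(x,Tx) = d(A,B) = d(y,Ty) then x = y. -/
open Filter Topology

theorem stmt14 {X : Type*} [MetricSpace X] (A B : Set X)
    (hA : A.Nonempty) (hB : B.Nonempty) (hA0 : A0 A B = A) (hp : pProperty A B)
    (T : X → X) (hT : ∀ x ∈ A, T x ∈ B)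
    (F : ℝ → ℝ) (hF : ∀ x y : ℝ, 0 < x → x < y → F x < F y)
    (a b c h τ : ℝ)
    (ha : 0 < a) (hb : 0 < b) (hc : 0 < c) (hh : 0 < h) (hτ : 0 < τ)
    (hsum : a + b + c + 2 * h = 1) (hc1 : c ≠ 1)
    (hprox : GFProximal A B T F a b c h τ) :
    ∀ x ∈ A, ∀ y ∈ A, dist x (T x) = setDist A B → dist y (T y) = setDist A B →
      x = y := by
  intro x hx y hy hxT hyT
  by_contra hne
  have key := hprox x hx y hy x hx y hy hxT hyT hne
  have hd : 0 < dist x y := dist_pos.mpr hne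
  simp only [dist_self, mul_zero, add_zero, zero_add] at key
  rw [dist_comm y x] at key
  have hrhs : a * dist x y + h * (dist x y + dist x y) = (a + 2*h) * dist x y := by ring
  rw [hrhs] at key
  have hlt : (a + 2*h) * dist x y < dist x y := by
    have : a + 2*h < 1 := by linarith
    nlinarith
  have hpos : 0 < (a + 2*h) * dist x y := by positivity
  have := hF _ _ hpos hlt
  linarith
end
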